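/- Let (V,⟨·,·⟩) be a real inner product space of dimension n ≥ 4 and let R be an algebraic curvature tensor on V having 2-nonnegative curvature operator of the second kind. Then R has nonnegative sectional curvature, i.e. R(x,y,x,y) ≥ 0 for every pair of orthonormal vectors x,y ∈ V. -/

import Mathlib

/-!
For orthonormal `x, y` the traceless symmetric forms `φ = (x ⊗ y + y ⊗ x) / √2` and
`ψ = (x ⊗ x - y ⊗ y) / √2` are orthonormal, and the symmetries of `R` give
`R̊(φ, φ) = R̊(ψ, ψ) = R(x, y, x, y)`. Hence 2-nonnegativity of `R̊` yields
`2 R(x, y, x, y) ≥ 0`.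
-/

open scoped RealInnerProductSpace

variable {V : Type*} [NormedAddCommGroup V] [InnerProductSpace ℝ V]

/-- `R` is an algebraic curvature tensor: antisymmetric in the first two slots,
symmetric under exchange of the first and second pairs, and satisfying the
first Bianchi identity. -/
def IsAlgCurvatureTensor (R : V →ₗ[ℝ] V →ₗ[ℝ] V →ₗ[ℝ] V →ₗ[ℝ] ℝ) : Prop :=
  (∀ x y z w : V, R x y z w = - R y x z w) ∧
  (∀ x y z w : V, R x y z w = R z w x y) ∧
  (∀ x y z w : V, R x y z w + R y z x w + R z x y w = 0)

/-- The Ricci curvature `Ric(x,y) = Σ_j R(x,e_j,y,e_j)` with respect to an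
orthonormal basis. -/
noncomputable def ricci {n : ℕ} (b : OrthonormalBasis (Fin n) ℝ V)
    (R : V →ₗ[ℝ] V →ₗ[ℝ] V →ₗ[ℝ] V →ₗ[ℝ] ℝ) (x y : V) : ℝ :=
  ∑ j, R x (b j) y (b j)

/-- The scalar curvature `S = Σ_{i,j} R_{ijij}`. -/
noncomputable def scalarCurv {n : ℕ} (b : OrthonormalBasis (Fin n) ℝ V)
    (R : V →ₗ[ℝ] V →ₗ[ℝ] V →ₗ[ℝ] V →ₗ[ℝ] ℝ) : ℝ :=
  ∑ i, ∑ j, R (b i) (b j) (b i) (b j)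

/-- `φ` is a symmetric bilinear form which is traceless with respect to the
orthonormal basis `b`. -/
def IsTracelessSymForm {n : ℕ} (b : OrthonormalBasis (Fin n) ℝ V)
    (φ : V →ₗ[ℝ] V →ₗ[ℝ] ℝ) : Prop :=
  (∀ x y : V, φ x y = φ y x) ∧ (∑ i, φ (b i) (b i) = 0)

/-- The inner product `⟨φ,ψ⟩ = Σ_{i,j} φ(e_i,e_j) ψ(e_i,e_j)` of bilinear forms. -/
noncomputable def formInner {n : ℕ} (b : OrthonormalBasis (Fin n) ℝ V)
    (φ ψ : V →ₗ[ℝ] V →ₗ[ℝ] ℝ) : ℝ :=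
  ∑ i, ∑ j, φ (b i) (b j) * ψ (b i) (b j)

/-- The curvature operator of the second kind
`R̊(φ,ψ) = Σ_{i,j,k,l} R_{ijkl} φ(e_i,e_l) ψ(e_j,e_k)`. -/
noncomputable def secondKind {n : ℕ} (b : OrthonormalBasis (Fin n) ℝ V)
    (R : V →ₗ[ℝ] V →ₗ[ℝ] V →ₗ[ℝ] V →ₗ[ℝ] ℝ)
    (φ ψ : V →ₗ[ℝ] V →ₗ[ℝ] ℝ) : ℝ :=
  ∑ i, ∑ j, ∑ k, ∑ l,
    R (b i) (b j) (b k) (b l) * φ (b i) (b l) * ψ (b j) (b k)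

/-- `R` has `k`-nonnegative curvature operator of the second kind:
`Σ_{a=1}^k R̊(φ_a,φ_a) ≥ 0` for every orthonormal `k`-tuple of traceless
symmetric bilinear forms. -/
def kNonnegSecondKind {n : ℕ} (b : OrthonormalBasis (Fin n) ℝ V)
    (R : V →ₗ[ℝ] V →ₗ[ℝ] V →ₗ[ℝ] V →ₗ[ℝ] ℝ) (k : ℕ) : Prop :=
  ∀ φ : Fin k → (V →ₗ[ℝ] V →ₗ[ℝ] ℝ),
    (∀ a, IsTracelessSymForm b (φ a)) →
    (∀ a a', formInner b (φ a) (φ a') = if a = a' then 1 else 0) →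
    0 ≤ ∑ a, secondKind b R (φ a) (φ a)

/-- `R` has `k`-positive curvature operator of the second kind:
`Σ_{a=1}^k R̊(φ_a,φ_a) > 0` for every orthonormal `k`-tuple of traceless
symmetric bilinear forms. -/
def kPosSecondKind {n : ℕ} (b : OrthonormalBasis (Fin n) ℝ V)
    (R : V →ₗ[ℝ] V →ₗ[ℝ] V →ₗ[ℝ] V →ₗ[ℝ] ℝ) (k : ℕ) : Prop :=
  ∀ φ : Fin k → (V →ₗ[ℝ] V →ₗ[ℝ] ℝ),
    (∀ a, IsTracelessSymForm b (φ a)) →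
    (∀ a a', formInner b (φ a) (φ a') = if a = a' then 1 else 0) →
    0 < ∑ a, secondKind b R (φ a) (φ a)

noncomputable def outerForm (x y : V) : V →ₗ[ℝ] V →ₗ[ℝ] ℝ :=
  (innerₗ V x).smulRight (innerₗ V y)

@[simp] lemma outerForm_apply (x y u v : V) : outerForm x y u v = ⟪x, u⟫ * ⟪y, v⟫ := rfl

namespace OrthonormalBasis

variable {ι : Type*} [Fintype ι] (b : OrthonormalBasis ι ℝ V)

lemma sum_inner_mul_apply (f : V →ₗ[ℝ] ℝ) (a : V) : ∑ i, ⟪a, b i⟫ * f (b i) = f a := by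
  conv_rhs => rw [← b.sum_repr' a]
  simp [real_inner_comm]

lemma sum_inner_mul_inner' (x y : V) : ∑ i, ⟪x, b i⟫ * ⟪y, b i⟫ = ⟪x, y⟫ :=
  (b.sum_inner_mul_apply (innerₗ V y) x).trans (real_inner_comm x y)

end OrthonormalBasis

section Forms

variable {n : ℕ} (b : OrthonormalBasis (Fin n) ℝ V)
  (R : V →ₗ[ℝ] V →ₗ[ℝ] V →ₗ[ℝ] V →ₗ[ℝ] ℝ) (φ φ' ψ ψ' : V →ₗ[ℝ] V →ₗ[ℝ] ℝ)

variable {φ} in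
lemma IsTracelessSymForm.smul (hφ : IsTracelessSymForm b φ) (c : ℝ) :
    IsTracelessSymForm b (c • φ) :=
  ⟨fun u v => by simp [hφ.1 u v], by simp [← Finset.mul_sum, hφ.2]⟩

lemma formInner_add_left : formInner b (φ + φ') ψ = formInner b φ ψ + formInner b φ' ψ := by
  simp [formInner, add_mul, Finset.sum_add_distrib]

lemma formInner_add_right : formInner b φ (ψ + ψ') = formInner b φ ψ + formInner b φ ψ' := by
  simp [formInner, mul_add, Finset.sum_add_distrib]

lemma formInner_sub_left : formInner b (φ - φ') ψ = formInner b φ ψ - formInner b φ' ψ := by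
  simp [formInner, sub_mul, Finset.sum_sub_distrib]

lemma formInner_sub_right : formInner b φ (ψ - ψ') = formInner b φ ψ - formInner b φ ψ' := by
  simp [formInner, mul_sub, Finset.sum_sub_distrib]

lemma formInner_smul_smul (c c' : ℝ) :
    formInner b (c • φ) (c' • ψ) = c * c' * formInner b φ ψ := by
  simp only [formInner, LinearMap.smul_apply, smul_eq_mul, Finset.mul_sum]
  exact Finset.sum_congr rfl fun _ _ => Finset.sum_congr rfl fun _ _ => by ring

lemma formInner_comm : formInner b φ ψ = formInner b ψ φ := by
  simp only [formInner, mul_comm]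

lemma secondKind_add_left :
    secondKind b R (φ + φ') ψ = secondKind b R φ ψ + secondKind b R φ' ψ := by
  simp [secondKind, mul_add, add_mul, Finset.sum_add_distrib]

lemma secondKind_add_right :
    secondKind b R φ (ψ + ψ') = secondKind b R φ ψ + secondKind b R φ ψ' := by
  simp [secondKind, mul_add, Finset.sum_add_distrib]

lemma secondKind_sub_left :
    secondKind b R (φ - φ') ψ = secondKind b R φ ψ - secondKind b R φ' ψ := by
  simp [secondKind, sub_mul, mul_sub, Finset.sum_sub_distrib]

lemma secondKind_sub_right :
    secondKind b R φ (ψ - ψ') = secondKind b R φ ψ - secondKind b R φ ψ' := by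
  simp [secondKind, mul_sub, Finset.sum_sub_distrib]

lemma secondKind_smul_smul (c c' : ℝ) :
    secondKind b R (c • φ) (c' • ψ) = c * c' * secondKind b R φ ψ := by
  simp only [secondKind, LinearMap.smul_apply, smul_eq_mul, Finset.mul_sum]
  exact Finset.sum_congr rfl fun _ _ => Finset.sum_congr rfl fun _ _ =>
    Finset.sum_congr rfl fun _ _ => Finset.sum_congr rfl fun _ _ => by ring

end Forms

section OuterForm

variable {n : ℕ} (b : OrthonormalBasis (Fin n) ℝ V)
  (R : V →ₗ[ℝ] V →ₗ[ℝ] V →ₗ[ℝ] V →ₗ[ℝ] ℝ)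

lemma formInner_outerForm (a e c d : V) :
    formInner b (outerForm a e) (outerForm c d) = ⟪a, c⟫ * ⟪e, d⟫ := by
  simp only [formInner, outerForm_apply]
  calc ∑ i, ∑ j, ⟪a, b i⟫ * ⟪e, b j⟫ * (⟪c, b i⟫ * ⟪d, b j⟫)
      = (∑ i, ⟪a, b i⟫ * ⟪c, b i⟫) * ∑ j, ⟪e, b j⟫ * ⟪d, b j⟫ := by
        simp only [Finset.sum_mul_sum]
        exact Finset.sum_congr rfl fun _ _ => Finset.sum_congr rfl fun _ _ => by ring
    _ = ⟪a, c⟫ * ⟪e, d⟫ := by simp only [b.sum_inner_mul_inner']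

lemma secondKind_outerForm (a e c d : V) :
    secondKind b R (outerForm a e) (outerForm c d) = R a c d e := by
  have sum_l : ∀ u v w, ∑ l, ⟪e, b l⟫ * R u v w (b l) = R u v w e :=
    fun u v w => b.sum_inner_mul_apply (R u v w) e
  have sum_k : ∀ u v, ∑ k, ⟪d, b k⟫ * R u v (b k) e = R u v d e :=
    fun u v => b.sum_inner_mul_apply ((R u v).flip e) d
  have sum_j : ∀ u, ∑ j, ⟪c, b j⟫ * R u (b j) d e = R u c d e :=
    fun u => b.sum_inner_mul_apply (((R u).flip d).flip e) c
  have sum_i : ∑ i, ⟪a, b i⟫ * R (b i) c d e = R a c d e :=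
    b.sum_inner_mul_apply (((R.flip c).flip d).flip e) a
  simp only [secondKind, outerForm_apply]
  calc ∑ i, ∑ j, ∑ k, ∑ l,
        R (b i) (b j) (b k) (b l) * (⟪a, b i⟫ * ⟪e, b l⟫) * (⟪c, b j⟫ * ⟪d, b k⟫)
      = ∑ i, ⟪a, b i⟫ * ∑ j, ⟪c, b j⟫ * ∑ k, ⟪d, b k⟫ * ∑ l, ⟪e, b l⟫ *
          R (b i) (b j) (b k) (b l) := by
        simp only [Finset.mul_sum]
        exact Finset.sum_congr rfl fun _ _ => Finset.sum_congr rfl fun _ _ =>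
          Finset.sum_congr rfl fun _ _ => Finset.sum_congr rfl fun _ _ => by ring
    _ = R a c d e := by simp only [sum_l, sum_k, sum_j, sum_i]

lemma sum_outerForm_apply_self (x y : V) : ∑ i, outerForm x y (b i) (b i) = ⟪x, y⟫ :=
  b.sum_inner_mul_inner' x y

variable {b} {x y : V}

lemma isTracelessSymForm_outerForm_add_swap (hxy : ⟪x, y⟫ = 0) :
    IsTracelessSymForm b (outerForm x y + outerForm y x) := by
  refine ⟨fun u v => by simp only [LinearMap.add_apply, outerForm_apply]; ring, ?_⟩
  simp only [LinearMap.add_apply, Finset.sum_add_distrib, sum_outerForm_apply_self,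
    real_inner_comm x y, hxy, add_zero]

lemma isTracelessSymForm_outerForm_sub (hxy : ⟪x, x⟫ = ⟪y, y⟫) :
    IsTracelessSymForm b (outerForm x x - outerForm y y) := by
  refine ⟨fun u v => by simp only [LinearMap.sub_apply, outerForm_apply]; ring, ?_⟩
  simp only [LinearMap.sub_apply, Finset.sum_sub_distrib, sum_outerForm_apply_self, hxy, sub_self]

lemma formInner_outerForm_add_swap_self :
    formInner b (outerForm x y + outerForm y x) (outerForm x y + outerForm y x)
      = 2 * (⟪x, x⟫ * ⟪y, y⟫ + ⟪x, y⟫ ^ 2) := by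
  simp only [formInner_add_left, formInner_add_right, formInner_outerForm, real_inner_comm x y]
  ring

lemma formInner_outerForm_sub_self :
    formInner b (outerForm x x - outerForm y y) (outerForm x x - outerForm y y)
      = ⟪x, x⟫ ^ 2 + ⟪y, y⟫ ^ 2 - 2 * ⟪x, y⟫ ^ 2 := by
  simp only [formInner_sub_left, formInner_sub_right, formInner_outerForm, real_inner_comm x y]
  ring

lemma formInner_outerForm_add_swap_sub (hxy : ⟪x, y⟫ = 0) :
    formInner b (outerForm x y + outerForm y x) (outerForm x x - outerForm y y) = 0 := by
  simp only [formInner_add_left, formInner_sub_right, formInner_outerForm, real_inner_comm x y,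
    hxy]
  ring

end OuterForm

namespace IsAlgCurvatureTensor

variable {R : V →ₗ[ℝ] V →ₗ[ℝ] V →ₗ[ℝ] V →ₗ[ℝ] ℝ}

lemma apply_self_left (hR : IsAlgCurvatureTensor R) (x z w : V) : R x x z w = 0 := by
  linarith [hR.1 x x z w]

lemma apply_swap_right (hR : IsAlgCurvatureTensor R) (x y z w : V) :
    R x y w z = - R x y z w := by
  rw [hR.2.1, hR.1, ← hR.2.1]

variable {n : ℕ} (b : OrthonormalBasis (Fin n) ℝ V)

lemma secondKind_outerForm_add_swap (hR : IsAlgCurvatureTensor R) (x y : V) :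
    secondKind b R (outerForm x y + outerForm y x) (outerForm x y + outerForm y x)
      = 2 * R x y x y := by
  simp only [secondKind_add_left, secondKind_add_right, secondKind_outerForm,
    hR.apply_self_left]
  rw [hR.1 y x, hR.apply_swap_right x y]
  ring

lemma secondKind_outerForm_sub (hR : IsAlgCurvatureTensor R) (x y : V) :
    secondKind b R (outerForm x x - outerForm y y) (outerForm x x - outerForm y y)
      = 2 * R x y x y := by
  simp only [secondKind_sub_left, secondKind_sub_right, secondKind_outerForm,
    hR.apply_self_left]
  rw [hR.1 y x, hR.apply_swap_right x y]
  ring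

end IsAlgCurvatureTensor

namespace kNonnegSecondKind

variable {n : ℕ} {b : OrthonormalBasis (Fin n) ℝ V}
  {R : V →ₗ[ℝ] V →ₗ[ℝ] V →ₗ[ℝ] V →ₗ[ℝ] ℝ} {φ ψ : V →ₗ[ℝ] V →ₗ[ℝ] ℝ}

lemma secondKind_add_secondKind_nonneg (h2 : kNonnegSecondKind b R 2)
    (hφ : IsTracelessSymForm b φ) (hψ : IsTracelessSymForm b ψ) (hpos : 0 < formInner b φ φ)
    (hnorm : formInner b ψ ψ = formInner b φ φ) (horth : formInner b φ ψ = 0) :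
    0 ≤ secondKind b R φ φ + secondKind b R ψ ψ := by
  set c := (√(formInner b φ φ))⁻¹
  have hc : c * c * formInner b φ φ = 1 := by
    rw [← mul_inv, Real.mul_self_sqrt hpos.le, inv_mul_cancel₀ hpos.ne']
  have hsum := h2 ![c • φ, c • ψ] (Fin.forall_fin_two.2 ⟨hφ.smul b c, hψ.smul b c⟩) <| by
    simp only [Fin.forall_fin_two, Matrix.cons_val_zero, Matrix.cons_val_one, formInner_smul_smul,
      hnorm, horth, formInner_comm b ψ φ, hc]
    simp
  rw [Fin.sum_univ_two] at hsum
  simp only [Matrix.cons_val_zero, Matrix.cons_val_one, secondKind_smul_smul, ← mul_add] at hsum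
  have hc2 : 0 < c * c := by positivity
  exact nonneg_of_mul_nonneg_right hsum hc2

lemma apply_nonneg_of_inner_eq_zero (h2 : kNonnegSecondKind b R 2) (hR : IsAlgCurvatureTensor R)
    {x y : V} (hx : x ≠ 0) (hnorm : ‖x‖ = ‖y‖) (hxy : ⟪x, y⟫ = 0) : 0 ≤ R x y x y := by
  have hself : ⟪x, x⟫ = ⟪y, y⟫ := by simp only [real_inner_self_eq_norm_sq, hnorm]
  have hpos : 0 < ⟪x, x⟫ := real_inner_self_pos.2 hx
  have hφ_pos :
      0 < formInner b (outerForm x y + outerForm y x) (outerForm x y + outerForm y x) := by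
    rw [formInner_outerForm_add_swap_self, ← hself]
    nlinarith [mul_pos hpos hpos]
  have hnorm_eq : formInner b (outerForm x x - outerForm y y) (outerForm x x - outerForm y y)
      = formInner b (outerForm x y + outerForm y x) (outerForm x y + outerForm y x) := by
    rw [formInner_outerForm_add_swap_self, formInner_outerForm_sub_self, hself, hxy]
    ring
  have hsum := h2.secondKind_add_secondKind_nonneg (isTracelessSymForm_outerForm_add_swap hxy)
    (isTracelessSymForm_outerForm_sub hself) hφ_pos hnorm_eq (formInner_outerForm_add_swap_sub hxy)
  rw [hR.secondKind_outerForm_add_swap, hR.secondKind_outerForm_sub] at hsum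
  linarith

end kNonnegSecondKind

theorem stmt_4_general {n : ℕ}
    (b : OrthonormalBasis (Fin n) ℝ V)
    (R : V →ₗ[ℝ] V →ₗ[ℝ] V →ₗ[ℝ] V →ₗ[ℝ] ℝ)
    (hR : IsAlgCurvatureTensor R)
    (h2 : kNonnegSecondKind b R 2) :
    ∀ x y : V, ‖x‖ = 1 → ‖y‖ = 1 → ⟪x, y⟫ = 0 → 0 ≤ R x y x y := fun _ _ hx hy hxy =>
  h2.apply_nonneg_of_inner_eq_zero hR (norm_ne_zero_iff.1 (hx ▸ one_ne_zero))
    (hx.trans hy.symm) hxy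

theorem stmt_4 {n : ℕ} (hn : 4 ≤ n)
    (b : OrthonormalBasis (Fin n) ℝ V)
    (R : V →ₗ[ℝ] V →ₗ[ℝ] V →ₗ[ℝ] V →ₗ[ℝ] ℝ)
    (hR : IsAlgCurvatureTensor R)
    (h2 : kNonnegSecondKind b R 2) :
    ∀ x y : V, ‖x‖ = 1 → ‖y‖ = 1 → ⟪x, y⟫ = 0 → 0 ≤ R x y x y :=
  stmt_4_general b R hR h2
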